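/- arXiv:2402.11492 — 4 statements merged into one kernel-verified Lean document; each statement's English description precedes it below -/
import Mathlib

section
/- Let e solve the linear ODE ė(t) = (I ⊗ A)e(t) - (L̃ ⊗ BK)e(t) on ℝ^{Nn}, and suppose v ∈ ℂⁿ satisfies vᵀA = λvᵀ and vᵀB = 0. Then for each block component e_i, the scalar function vᵀe_i(t) satisfies vᵀe_i(t) = e^{λt} vᵀe_i(0). -/
/-!
Pairing the dynamics with `I ⊗ vᵀ` and using the mixed-product rule for Kronecker products,
`(I ⊗ vᵀ)(I ⊗ A - L̃ ⊗ BK) = I ⊗ vᵀA - L̃ ⊗ vᵀBK = λ (I ⊗ vᵀ)`, so `(I ⊗ vᵀ)e` solves the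
scalar equation `ẏ = λ y` and hence equals `e^{λt} (I ⊗ vᵀ)e(0)`.
-/

open Matrix Kronecker

theorem map_kronecker {R S l m n p : Type*} [Mul R] [Mul S] {f : R → S}
    (hf : ∀ a b, f (a * b) = f a * f b) (A : Matrix l m R) (B : Matrix n p R) :
    (A ⊗ₖ B).map f = A.map f ⊗ₖ B.map f := by
  ext
  simp [kroneckerMap_apply, hf]

section Kronecker

variable {R ι n : Type*} [CommRing R] [Fintype ι] [DecidableEq ι] [Fintype n]

theorem one_kronecker_replicateRow_mul_eq_smul {m : Type*} [Fintype m]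
    (A : Matrix n n R) (B : Matrix n m R) (K : Matrix m n R) (L : Matrix ι ι R)
    {v : n → R} {lam : R} (hA : v ᵥ* A = lam • v) (hB : v ᵥ* B = 0) :
    ((1 : Matrix ι ι R) ⊗ₖ replicateRow (Fin 1) v) * (1 ⊗ₖ A - L ⊗ₖ (B * K)) =
      lam • ((1 : Matrix ι ι R) ⊗ₖ replicateRow (Fin 1) v) := by
  rw [Matrix.mul_sub, ← mul_kronecker_mul, ← mul_kronecker_mul, ← replicateRow_vecMul, hA,
    ← Matrix.mul_assoc, ← replicateRow_vecMul, hB, replicateRow_zero, Matrix.zero_mul,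
    kronecker_zero, sub_zero, Matrix.one_mul, replicateRow_smul, kronecker_smul]

theorem one_kronecker_replicateRow_mulVec_apply (v : n → R) (x : ι × n → R) (i : ι) (k : Fin 1) :
    (((1 : Matrix ι ι R) ⊗ₖ replicateRow (Fin 1) v) *ᵥ x) (i, k) = ∑ j, v j * x (i, j) := by
  simp [mulVec, dotProduct, kroneckerMap_apply, one_apply, Fintype.sum_prod_type]

end Kronecker

theorem eq_exp_smul_of_hasDerivAt {E : Type*} [NormedAddCommGroup E] [NormedSpace ℂ E]
    {f : ℝ → E} {lam : ℂ} (hf : ∀ s, HasDerivAt f (lam • f s) s) (t : ℝ) :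
    f t = Complex.exp (lam * t) • f 0 := by
  have hexp : ∀ s : ℝ, HasDerivAt (fun s : ℝ => Complex.exp (-(lam * s)))
      (-lam * Complex.exp (-(lam * s))) s := fun s => by
    simpa [mul_comm] using ((((hasDerivAt_id (s : ℂ)).const_mul lam).neg).cexp).comp_ofReal
  have hderiv : ∀ s, HasDerivAt (fun s : ℝ => Complex.exp (-(lam * s)) • f s) 0 s := fun s => by
    refine ((hexp s).smul (hf s)).congr_deriv ?_
    rw [smul_smul, neg_mul, neg_smul, mul_comm, add_neg_cancel]
  have hconst := is_const_of_deriv_eq_zero (fun s => (hderiv s).differentiableAt)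
    (fun s => (hderiv s).deriv) t 0
  calc f t = Complex.exp (lam * t) • Complex.exp (-(lam * t)) • f t := by
        rw [smul_smul, ← Complex.exp_add, add_neg_cancel, Complex.exp_zero, one_smul]
    _ = Complex.exp (lam * t) • f 0 := by
        rw [hconst, Complex.ofReal_zero, mul_zero, neg_zero, Complex.exp_zero, one_smul]

theorem mulVec_ofReal_comp_eq_exp_smul {ι κ : Type*} [Fintype ι] [Fintype κ]
    {M : Matrix ι ι ℝ} {e : ℝ → ι → ℝ} (he : ∀ t, HasDerivAt e (M *ᵥ e t) t)
    {W : Matrix κ ι ℂ} {lam : ℂ} (hW : W * M.map Complex.ofReal = lam • W) (t : ℝ) :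
    W *ᵥ (Complex.ofReal ∘ e t) = Complex.exp (lam * t) • W *ᵥ (Complex.ofReal ∘ e 0) := by
  refine eq_exp_smul_of_hasDerivAt (f := fun s => W *ᵥ (Complex.ofReal ∘ e s)) (fun s => ?_) t
  have hec : HasDerivAt (fun s => Complex.ofReal ∘ e s)
      (M.map Complex.ofReal *ᵥ (Complex.ofReal ∘ e s)) s := by
    refine hasDerivAt_pi.2 fun k => ?_
    have hmap : ((M *ᵥ e s) k : ℂ) = (M.map Complex.ofReal *ᵥ (Complex.ofReal ∘ e s)) k :=
      RingHom.map_mulVec Complex.ofRealHom M (e s) k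
    rw [← hmap]
    exact (hasDerivAt_pi.1 (he s) k).ofReal_comp
  have hWe := ((mulVecLin W).toContinuousLinearMap.restrictScalars ℝ).hasFDerivAt.comp_hasDerivAt
    s hec
  rw [Function.comp_def] at hWe
  simp only [ContinuousLinearMap.coe_restrictScalars', LinearMap.coe_toContinuousLinearMap',
    mulVecLin_apply, mulVec_mulVec, hW, smul_mulVec] at hWe
  exact hWe

/-- If `e` solves `ė = (I ⊗ A)e - (L̃ ⊗ BK)e` and `v` is a left eigenvector of `A`
annihilated by `Bᵀ` (i.e. `vᵀA = λvᵀ`, `vᵀB = 0`), then each block component satisfies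
`vᵀe_i(t) = e^{λt} vᵀe_i(0)`. -/
theorem left_eigvec_error_dynamics {N n m : ℕ}
    (A : Matrix (Fin n) (Fin n) ℝ) (B : Matrix (Fin n) (Fin m) ℝ)
    (K : Matrix (Fin m) (Fin n) ℝ) (Ltil : Matrix (Fin N) (Fin N) ℝ)
    (e : ℝ → (Fin N × Fin n → ℝ))
    (he : ∀ t, HasDerivAt e
      ((((1 : Matrix (Fin N) (Fin N) ℝ) ⊗ₖ A) - Ltil ⊗ₖ (B * K)) *ᵥ e t) t)
    (lam : ℂ) (v : Fin n → ℂ)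
    (hv1 : (A.map (Complex.ofReal))ᵀ *ᵥ v = lam • v)
    (hv2 : (B.map (Complex.ofReal))ᵀ *ᵥ v = 0)
    (i : Fin N) (t : ℝ) :
    ∑ j, v j * (e t (i, j) : ℂ)
      = Complex.exp (lam * t) * ∑ j, v j * (e 0 (i, j) : ℂ) := by
  rw [← vecMul_transpose, transpose_transpose] at hv1 hv2
  have hBK : (B * K).map Complex.ofReal = B.map Complex.ofReal * K.map Complex.ofReal :=
    Matrix.map_mul (f := Complex.ofRealHom)
  have hW : ((1 : Matrix (Fin N) (Fin N) ℂ) ⊗ₖ replicateRow (Fin 1) v) *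
      (((1 : Matrix (Fin N) (Fin N) ℝ) ⊗ₖ A) - Ltil ⊗ₖ (B * K)).map Complex.ofReal =
      lam • ((1 : Matrix (Fin N) (Fin N) ℂ) ⊗ₖ replicateRow (Fin 1) v) := by
    rw [Matrix.map_sub _ Complex.ofReal_sub, map_kronecker Complex.ofReal_mul,
      map_kronecker Complex.ofReal_mul, hBK,
      Matrix.map_one _ Complex.ofReal_zero Complex.ofReal_one]
    exact one_kronecker_replicateRow_mul_eq_smul _ _ _ _ hv1 hv2
  have hrow := congrFun (mulVec_ofReal_comp_eq_exp_smul he hW t) (i, 0)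
  simpa [one_kronecker_replicateRow_mulVec_apply] using hrow
end

section
/- Under the previous setup, if Re(λ) ≥ 0 and vᵀe_i(0) ≠ 0 for some i, then vᵀe_i(t) does not converge to 0 as t → ∞; hence the coupled system cannot achieve exponential synchronization to zero error. Consequently, stabilizability of (A,B) is necessary for exponential cluster synchronization from arbitrary initial conditions. -/
open Matrix Kronecker Filter

/-!
A left eigenvector `v` of `A` with `vᵀB = 0` sees neither the feedback `BK` nor the coupling
`L̃ ⊗ BK`, so the scalar `y(t) = vᵀeᵢ(t)` obeys `ẏ = λy` and equals `exp(λt) y(0)`.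
As `Re λ ≥ 0`, `|y(t)| ≥ |y(0)| > 0` for all `t ≥ 0`, so neither `y` nor `e` can tend to `0`.
-/

namespace Matrix

variable {R : Type*} [CommRing R] {ι κ : Type*} [Fintype ι] [Fintype κ]

theorem dotProduct_kronecker_mulVec_row (P : Matrix ι ι R) (C : Matrix κ κ R) (w : κ → R)
    (x : ι × κ → R) (i : ι) :
    w ⬝ᵥ (fun j => ((P ⊗ₖ C) *ᵥ x) (i, j)) =
      ∑ k, P i k * ((w ᵥ* C) ⬝ᵥ fun l => x (k, l)) := by
  simp only [dotProduct, mulVec, vecMul, kroneckerMap_apply, Fintype.sum_prod_type,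
    Finset.mul_sum, Finset.sum_mul]
  rw [Finset.sum_comm]
  refine Finset.sum_congr rfl fun k _ => ?_
  rw [Finset.sum_comm]
  exact Finset.sum_congr rfl fun l _ => Finset.sum_congr rfl fun j _ => by ring

theorem dotProduct_closedLoop_mulVec_row [DecidableEq ι] {m : Type*} [Fintype m]
    {A : Matrix κ κ R} {B : Matrix κ m R} (K : Matrix m κ R) (L : Matrix ι ι R) {w : κ → R}
    {lam : R} (hA : w ᵥ* A = lam • w) (hB : w ᵥ* B = 0) (x : ι × κ → R) (i : ι) :
    w ⬝ᵥ (fun j => ((1 ⊗ₖ A - L ⊗ₖ (B * K)) *ᵥ x) (i, j)) = lam * w ⬝ᵥ fun j => x (i, j) := by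
  have hBK : w ᵥ* (B * K) = 0 := by rw [← vecMul_vecMul, hB, zero_vecMul]
  have hsplit : (fun j => ((1 ⊗ₖ A - L ⊗ₖ (B * K)) *ᵥ x) (i, j)) =
      (fun j => ((1 ⊗ₖ A) *ᵥ x) (i, j)) - fun j => ((L ⊗ₖ (B * K)) *ᵥ x) (i, j) := by
    ext j
    simp [sub_mulVec]
  rw [hsplit, dotProduct_sub, dotProduct_kronecker_mulVec_row, dotProduct_kronecker_mulVec_row,
    hA, hBK]
  simp [one_apply, smul_dotProduct]

end Matrix

theorem HasDerivAt.dotProduct_ofReal {ι : Type*} [Fintype ι] {x : ℝ → ι → ℝ} {x' : ι → ℝ}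
    {t : ℝ} (hx : HasDerivAt x x' t) (w : ι → ℂ) :
    HasDerivAt (fun s => w ⬝ᵥ fun j => (x s j : ℂ)) (w ⬝ᵥ fun j => (x' j : ℂ)) t :=
  HasDerivAt.fun_sum fun j _ => ((hasDerivAt_pi.mp hx j).ofReal_comp).const_mul (w j)

theorem hasDerivAt_dotProduct_row_of_closedLoop {ι κ m : Type*} [Fintype ι] [DecidableEq ι]
    [Fintype κ] [Fintype m] {A : Matrix κ κ ℝ} {B : Matrix κ m ℝ} {K : Matrix m κ ℝ}
    {L : Matrix ι ι ℝ} {e : ℝ → ι × κ → ℝ}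
    (he : ∀ t, HasDerivAt e ((1 ⊗ₖ A - L ⊗ₖ (B * K)) *ᵥ e t) t) {lam : ℂ} {w : κ → ℂ}
    (hA : w ᵥ* A.map Complex.ofReal = lam • w) (hB : w ᵥ* B.map Complex.ofReal = 0) (i : ι)
    (t : ℝ) :
    HasDerivAt (fun t => w ⬝ᵥ fun j => (e t (i, j) : ℂ))
      (lam * w ⬝ᵥ fun j => (e t (i, j) : ℂ)) t := by
  set M := 1 ⊗ₖ A - L ⊗ₖ (B * K)
  have hM : M.map Complex.ofReal = 1 ⊗ₖ A.map Complex.ofReal -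
      L.map Complex.ofReal ⊗ₖ (B.map Complex.ofReal * K.map Complex.ofReal) := by
    ext ⟨a, b⟩ ⟨c, d⟩
    simp [M, one_apply, mul_apply, apply_ite Complex.ofReal]
  have hrow := (hasDerivAt_pi.mpr fun j => hasDerivAt_pi.mp (he t) (i, j)).dotProduct_ofReal w
  convert hrow using 1
  rw [← dotProduct_closedLoop_mulVec_row (K.map Complex.ofReal) (L.map Complex.ofReal) hA hB
    (fun p => (e t p : ℂ)) i, ← hM]
  congr 1
  ext j
  exact (RingHom.map_mulVec Complex.ofRealHom M (e t) (i, j)).symm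

theorem Complex.eq_exp_mul_of_hasDerivAt {y : ℝ → ℂ} {lam : ℂ}
    (hy : ∀ t, HasDerivAt y (lam * y t) t) (t : ℝ) :
    y t = Complex.exp (lam * t) * y 0 := by
  have hz : ∀ s : ℝ, HasDerivAt (fun s : ℝ => Complex.exp (-(lam * s)) * y s) 0 s := by
    intro s
    have hexp : HasDerivAt (fun s : ℝ => Complex.exp (-(lam * s)))
        (Complex.exp (-(lam * s)) * -lam) s := by
      simpa using ((((hasDerivAt_id s).ofReal_comp).const_mul lam).neg).cexp
    exact (hexp.fun_mul (hy s)).congr_deriv (by ring)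
  have hconst := is_const_of_deriv_eq_zero (fun s => (hz s).differentiableAt)
    (fun s => (hz s).deriv) t 0
  simp only [Complex.ofReal_zero, mul_zero, neg_zero, Complex.exp_zero, one_mul] at hconst
  rw [← hconst, ← mul_assoc, ← Complex.exp_add]
  simp

theorem Complex.norm_le_norm_of_hasDerivAt_mul {y : ℝ → ℂ} {lam : ℂ} (hre : 0 ≤ lam.re)
    (hy : ∀ t, HasDerivAt y (lam * y t) t) {t : ℝ} (ht : 0 ≤ t) : ‖y 0‖ ≤ ‖y t‖ := by
  rw [Complex.eq_exp_mul_of_hasDerivAt hy t, norm_mul, Complex.norm_exp]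
  simp only [Complex.mul_re, Complex.ofReal_re, Complex.ofReal_im, mul_zero, sub_zero]
  exact le_mul_of_one_le_left (norm_nonneg _) (Real.one_le_exp (mul_nonneg hre ht))

theorem Complex.not_tendsto_zero_of_hasDerivAt_mul {y : ℝ → ℂ} {lam : ℂ} (hre : 0 ≤ lam.re)
    (hy : ∀ t, HasDerivAt y (lam * y t) t) (h0 : y 0 ≠ 0) : ¬ Tendsto y atTop (nhds 0) := by
  intro hlim
  have hbound : ∀ᶠ t in atTop, ‖y 0‖ ≤ ‖y t‖ :=
    (eventually_ge_atTop 0).mono fun t ht => Complex.norm_le_norm_of_hasDerivAt_mul hre hy ht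
  exact h0 (norm_le_zero_iff.mp (ge_of_tendsto (by simpa using hlim.norm) hbound))

/-- Necessity of stabilizability (Theorem 2): under `ė = (I ⊗ A)e - (L̃ ⊗ BK)e` with
`vᵀA = λvᵀ`, `vᵀB = 0`, `Re λ ≥ 0` and `vᵀe_i(0) ≠ 0` for some `i`, the scalar `vᵀe_i(t)`
does not converge to `0` as `t → ∞`, hence the error `e(t)` does not converge to `0`:
the coupled system cannot achieve (exponential) cluster synchronization. -/
theorem no_sync_without_stabilizability {N n m : ℕ}
    (A : Matrix (Fin n) (Fin n) ℝ) (B : Matrix (Fin n) (Fin m) ℝ)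
    (K : Matrix (Fin m) (Fin n) ℝ) (Ltil : Matrix (Fin N) (Fin N) ℝ)
    (e : ℝ → (Fin N × Fin n → ℝ))
    (he : ∀ t, HasDerivAt e
      ((((1 : Matrix (Fin N) (Fin N) ℝ) ⊗ₖ A) - Ltil ⊗ₖ (B * K)) *ᵥ e t) t)
    (lam : ℂ) (v : Fin n → ℂ)
    (hv1 : (A.map (Complex.ofReal))ᵀ *ᵥ v = lam • v)
    (hv2 : (B.map (Complex.ofReal))ᵀ *ᵥ v = 0)
    (hre : 0 ≤ lam.re)
    (i : Fin N)
    (h0 : ∑ j, v j * (e 0 (i, j) : ℂ) ≠ 0) :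
    ¬ Tendsto (fun t => ∑ j, v j * (e t (i, j) : ℂ)) atTop (nhds 0) ∧
    ¬ Tendsto e atTop (nhds 0) := by
  rw [mulVec_transpose] at hv1 hv2
  have hsync := Complex.not_tendsto_zero_of_hasDerivAt_mul hre
    (hasDerivAt_dotProduct_row_of_closedLoop he hv1 hv2 i) h0
  refine ⟨hsync, fun hlim => hsync ?_⟩
  have hcont : Continuous fun x : Fin N × Fin n → ℝ => v ⬝ᵥ fun j => (x (i, j) : ℂ) := by
    fun_prop
  simpa [Function.comp_def] using (hcont.tendsto 0).comp hlim
end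

section
/- Let L^∞ = diag(c₁L₁₁^∞,…,c_pL_pp^∞) + L₀^∞ (block decomposition), and let Ξ = diag(Ξ₁,…,Ξ_p) be positive diagonal. If for every block k, Ξ_k L_kk^∞ + (L_kk^∞)ᵀΞ_k ≻ 0 and c_k > -λ_min(ΞL₀^∞ + (L₀^∞)ᵀΞ)/λ_min(Ξ_k L_kk^∞ + (L_kk^∞)ᵀΞ_k), then ΞL^∞ + (L^∞)ᵀΞ ≻ 0. -/
/-!
With `H_k = Ξ_k L_kk + L_kkᵀ Ξ_k` and `H₀ = Ξ L₀ + L₀ᵀ Ξ`, the symmetrised matrix is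
`blockDiagonal' (c_k H_k) + H₀`. Shift `μ₀ = λ_min(H₀)` from the second summand to the first:
`H₀ - μ₀ I` is positive semidefinite, while each block
`c_k H_k + μ₀ I ⪰ (c_k λ_min(H_k) + μ₀) I` is positive definite exactly by the threshold on `c_k`.
-/

open Matrix
open scoped ComplexOrder

namespace Matrix

variable {𝕜 n : Type*} [RCLike 𝕜] [Fintype n] [DecidableEq n]

open scoped MatrixOrder in
theorem IsHermitian.posSemidef_sub_iInf_eigenvalues_smul_one {A : Matrix n n 𝕜}
    (hA : A.IsHermitian) : (A - (⨅ i, hA.eigenvalues i) • (1 : Matrix n n 𝕜)).PosSemidef := by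
  rw [← le_iff, ← Algebra.algebraMap_eq_smul_one,
    algebraMap_le_iff_le_spectrum (R := ℝ) hA.isSelfAdjoint, hA.spectrum_real_eq_range_eigenvalues]
  rintro _ ⟨i, rfl⟩
  exact ciInf_le (Set.finite_range _).bddBelow i

theorem PosDef.iInf_eigenvalues_pos [Nonempty n] {A : Matrix n n 𝕜} (hA : A.PosDef) :
    0 < ⨅ i, hA.1.eigenvalues i := by
  obtain ⟨i, hi⟩ := exists_eq_ciInf_of_finite (f := hA.1.eigenvalues)
  exact hi ▸ hA.eigenvalues_pos i

theorem PosDef.smul_add_smul_one [Nonempty n] {A : Matrix n n 𝕜} (hA : A.PosDef) {c μ : ℝ}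
    (hc₀ : 0 ≤ c) (hc : -μ / (⨅ i, hA.1.eigenvalues i) < c) :
    (c • A + μ • (1 : Matrix n n 𝕜)).PosDef := by
  set l := ⨅ i, hA.1.eigenvalues i
  have hμ : 0 < c * l + μ := by
    rw [div_lt_iff₀ hA.iInf_eigenvalues_pos] at hc
    linarith
  have hsplit : c • A + μ • (1 : Matrix n n 𝕜) = (c * l + μ) • 1 + c • (A - l • 1) := by
    rw [smul_sub, add_smul, mul_smul]; abel
  rw [hsplit]
  exact (PosDef.one.smul hμ).add_posSemidef
    (hA.1.posSemidef_sub_iInf_eigenvalues_smul_one.smul hc₀)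

section BlockDiagonal

variable {ι : Type*} {m : ι → Type*}

theorem exists_ne_zero_of_sigma_ne_zero {α : Type*} [Zero α] {x : (k : ι) × m k → α}
    (hx : x ≠ 0) : ∃ k, (fun i => x ⟨k, i⟩) ≠ 0 := by
  contrapose! hx
  ext ⟨k, i⟩
  exact congrFun (hx k) i

theorem blockDiagonal'_add_smul_one {α R : Type*} [Semiring α] [SMulZeroClass R α]
    [DecidableEq ι] [∀ k, DecidableEq (m k)] (M : ∀ k, Matrix (m k) (m k) α) (a : R) :
    (blockDiagonal' fun k => M k + a • (1 : Matrix (m k) (m k) α)) = blockDiagonal' M + a • 1 := by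
  rw [← blockDiagonal'_one, ← blockDiagonal'_smul, ← blockDiagonal'_add]
  rfl

variable [Fintype ι] [DecidableEq ι] [∀ k, Fintype (m k)]

theorem dotProduct_blockDiagonal'_mulVec {α : Type*} [NonUnitalNonAssocSemiring α]
    (M : ∀ k, Matrix (m k) (m k) α) (x y : (k : ι) × m k → α) :
    x ⬝ᵥ (blockDiagonal' M *ᵥ y)
      = ∑ k, (fun i => x ⟨k, i⟩) ⬝ᵥ (M k *ᵥ fun i => y ⟨k, i⟩) := by
  simp only [dotProduct, mulVec, ← Finset.univ_sigma_univ, Finset.sum_sigma, Finset.mul_sum]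
  refine Finset.sum_congr rfl fun k _ => Finset.sum_congr rfl fun i _ => ?_
  rw [Finset.sum_eq_single k]
  · simp [blockDiagonal'_apply_eq]
  · intro l _ hlk
    simp [blockDiagonal'_apply_ne _ _ _ (Ne.symm hlk)]
  · simp

theorem PosDef.blockDiagonal' {M : ∀ k, Matrix (m k) (m k) 𝕜} (hM : ∀ k, (M k).PosDef) :
    (blockDiagonal' M).PosDef := by
  refine posDef_iff_dotProduct_mulVec.mpr
    ⟨isHermitian_blockDiagonal'_iff.mpr fun k => (hM k).1, fun x hx => ?_⟩
  obtain ⟨k₀, hk₀⟩ := exists_ne_zero_of_sigma_ne_zero hx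
  rw [dotProduct_blockDiagonal'_mulVec]
  refine Finset.sum_pos' (fun k _ => ?_) ⟨k₀, Finset.mem_univ _, ?_⟩
  · exact (hM k).posSemidef.dotProduct_mulVec_nonneg _
  · exact (hM k₀).dotProduct_mulVec_pos hk₀

theorem blockDiagonal'_mul_add_transpose_mul {α : Type*} [CommSemiring α]
    (X L : ∀ k, Matrix (m k) (m k) α) :
    blockDiagonal' X * blockDiagonal' L + (blockDiagonal' L)ᵀ * blockDiagonal' X
      = blockDiagonal' fun k => X k * L k + (L k)ᵀ * X k := by
  rw [blockDiagonal'_transpose, ← blockDiagonal'_mul, ← blockDiagonal'_mul, ← blockDiagonal'_add]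
  rfl

end BlockDiagonal

end Matrix

theorem coupling_strength_threshold_general {p : ℕ} (mdim : Fin p → ℕ)
    [∀ k, NeZero (mdim k)]
    (Lkk Xik : ∀ k : Fin p, Matrix (Fin (mdim k)) (Fin (mdim k)) ℝ)
    (c : Fin p → ℝ)
    (L0 : Matrix ((k : Fin p) × Fin (mdim k)) ((k : Fin p) × Fin (mdim k)) ℝ)
    (hH0 : (Matrix.blockDiagonal' Xik * L0 + L0ᵀ * Matrix.blockDiagonal' Xik).IsHermitian)
    (hHk : ∀ k, (Xik k * Lkk k + (Lkk k)ᵀ * Xik k).PosDef)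
    (hcpos : ∀ k, 0 < c k)
    (hc : ∀ k, c k > -(⨅ i, hH0.eigenvalues i) / (⨅ i, (hHk k).1.eigenvalues i)) :
    (Matrix.blockDiagonal' Xik
        * (Matrix.blockDiagonal' (fun k => c k • Lkk k) + L0)
      + (Matrix.blockDiagonal' (fun k => c k • Lkk k) + L0)ᵀ
        * Matrix.blockDiagonal' Xik).PosDef := by
  set μ₀ := ⨅ i, hH0.eigenvalues i
  have hsplit : Matrix.blockDiagonal' Xik * (Matrix.blockDiagonal' (fun k => c k • Lkk k) + L0)
        + (Matrix.blockDiagonal' (fun k => c k • Lkk k) + L0)ᵀ * Matrix.blockDiagonal' Xik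
      = Matrix.blockDiagonal' (fun k => c k • (Xik k * Lkk k + (Lkk k)ᵀ * Xik k) + μ₀ • 1)
        + (Matrix.blockDiagonal' Xik * L0 + L0ᵀ * Matrix.blockDiagonal' Xik - μ₀ • 1) := by
    rw [blockDiagonal'_add_smul_one, mul_add, transpose_add, add_mul, add_add_add_comm,
      blockDiagonal'_mul_add_transpose_mul]
    simp only [transpose_smul, mul_smul_comm, smul_mul, smul_add]
    abel
  rw [hsplit]
  have hblocks := PosDef.blockDiagonal' fun k => (hHk k).smul_add_smul_one (hcpos k).le (hc k)
  exact hblocks.add_posSemidef hH0.posSemidef_sub_iInf_eigenvalues_smul_one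

/-- Coupling-strength threshold (Theorem 1): with `L^∞ = diag(c₁L₁₁^∞,…,c_pL_pp^∞) + L₀^∞`
and positive diagonal `Ξ = diag(Ξ₁,…,Ξ_p)`, if each `Ξ_k L_kk^∞ + (L_kk^∞)ᵀ Ξ_k ≻ 0` and
`c_k > -λ_min(ΞL₀^∞ + (L₀^∞)ᵀΞ) / λ_min(Ξ_k L_kk^∞ + (L_kk^∞)ᵀΞ_k)` (with `c_k > 0`),
then `ΞL^∞ + (L^∞)ᵀΞ ≻ 0`. Nodes are indexed by the sigma type `(k : Fin p) × Fin (mdim k)`. -/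
theorem coupling_strength_threshold {p : ℕ} [NeZero p] (mdim : Fin p → ℕ)
    [∀ k, NeZero (mdim k)]
    (Lkk Xik : ∀ k : Fin p, Matrix (Fin (mdim k)) (Fin (mdim k)) ℝ)
    (c : Fin p → ℝ)
    (L0 : Matrix ((k : Fin p) × Fin (mdim k)) ((k : Fin p) × Fin (mdim k)) ℝ)
    (hXid : ∀ k, (Xik k).IsDiag) (hXip : ∀ k, (Xik k).PosDef)
    (hH0 : (Matrix.blockDiagonal' Xik * L0 + L0ᵀ * Matrix.blockDiagonal' Xik).IsHermitian)
    (hHk : ∀ k, (Xik k * Lkk k + (Lkk k)ᵀ * Xik k).PosDef)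
    (hcpos : ∀ k, 0 < c k)
    (hc : ∀ k, c k > -(⨅ i, hH0.eigenvalues i) / (⨅ i, (hHk k).1.eigenvalues i)) :
    (Matrix.blockDiagonal' Xik
        * (Matrix.blockDiagonal' (fun k => c k • Lkk k) + L0)
      + (Matrix.blockDiagonal' (fun k => c k • Lkk k) + L0)ᵀ
        * Matrix.blockDiagonal' Xik).PosDef :=
  coupling_strength_threshold_general mdim Lkk Xik c L0 hH0 hHk hcpos hc
end

section
/- Under the in-degree balance condition, the cluster synchronization manifold M = {x ∈ ℝ^{Nn} : x_i = x_j whenever i,j are in the same cluster} is invariant for the dynamics ẋ = (I⊗A)x - (L⊗BK)x, i.e., if x(0) ∈ M then x(t) ∈ M for all t. -/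
/-! Under in-degree balance, the weighted Laplacian annihilates every vector that is constant
on clusters: in row `i`, each off-cluster block of weights sums to zero, and the within-cluster
block is cancelled by the diagonal. Hence `L ⊗ BK` kills the synchronization subspace `M`, while
`I ⊗ A` preserves it, so `M` is invariant under the linear vector field `F`. The closed subspace
`M` is then invariant under the power series `exp (t F)`, and by uniqueness of solutions of linear
ODEs the trajectory is `x t = exp (t F) (x 0)`. -/

open Matrix Kronecker Finset

theorem Finset.sum_mul_eq_of_forall_eq {α R : Type*} [NonUnitalNonAssocSemiring R]
    {s : Finset α} {a u : α → R} {c : R} (h : ∀ j ∈ s, u j = c) :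
    ∑ j ∈ s, a j * u j = (∑ j ∈ s, a j) * c := by
  rw [sum_mul]
  exact sum_congr rfl fun j hj => by rw [h j hj]

section Cluster

variable {ι κ ν R : Type*} [Fintype ι]

def IsInDegreeBalanced [DecidableEq κ] [AddCommMonoid R] (a : ι → ι → R) (cl : ι → κ) : Prop :=
  ∀ i ℓ, cl i ≠ ℓ → ∑ j ∈ univ.filter (fun j => cl j = ℓ), a i j = 0

def weightedLaplacian [DecidableEq ι] [AddCommGroup R] (a : ι → ι → R) : Matrix ι ι R :=
  diagonal (fun i => ∑ k, a i k) - of a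

def clusterSynchronized (R ν : Type*) [Semiring R] (cl : ι → κ) : Submodule R (ι × ν → R) where
  carrier := {v | ∀ i j, cl i = cl j → ∀ d, v (i, d) = v (j, d)}
  add_mem' hu hv i j h d := by simp only [Pi.add_apply, hu i j h d, hv i j h d]
  zero_mem' _ _ _ _ := rfl
  smul_mem' c _ hv i j h d := by simp only [Pi.smul_apply, hv i j h d]

theorem IsInDegreeBalanced.sum_mul_eq [Fintype κ] [DecidableEq κ] [NonUnitalNonAssocSemiring R]
    {a : ι → ι → R} {cl : ι → κ} (hbal : IsInDegreeBalanced a cl) {u : ι → R}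
    (hu : ∀ i j, cl i = cl j → u i = u j) (i : ι) :
    ∑ j, a i j * u j = (∑ j, a i j) * u i := by
  have hfiber : ∀ ℓ, ∑ j ∈ univ.filter (fun j => cl j = ℓ), a i j * u j =
      (∑ j ∈ univ.filter (fun j => cl j = ℓ), a i j) * u i := by
    intro ℓ
    by_cases hℓ : cl i = ℓ
    · exact sum_mul_eq_of_forall_eq fun j hj => hu j i ((mem_filter.1 hj).2.trans hℓ.symm)
    · rw [hbal i ℓ hℓ, zero_mul]
      obtain hempty | ⟨j₀, hj₀⟩ := (univ.filter (fun j => cl j = ℓ)).eq_empty_or_nonempty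
      · rw [hempty, sum_empty]
      · rw [sum_mul_eq_of_forall_eq (c := u j₀) fun j hj =>
          hu j j₀ ((mem_filter.1 hj).2.trans (mem_filter.1 hj₀).2.symm), hbal i ℓ hℓ, zero_mul]
  rw [← sum_fiberwise univ cl, ← sum_fiberwise univ cl (a i), sum_mul]
  exact sum_congr rfl fun ℓ _ => hfiber ℓ

theorem IsInDegreeBalanced.weightedLaplacian_mulVec_eq_zero [Fintype κ] [DecidableEq κ]
    [DecidableEq ι] [NonUnitalNonAssocRing R] {a : ι → ι → R} {cl : ι → κ}
    (hbal : IsInDegreeBalanced a cl) {u : ι → R} (hu : ∀ i j, cl i = cl j → u i = u j) :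
    weightedLaplacian a *ᵥ u = 0 := by
  ext i
  rw [weightedLaplacian, sub_mulVec, Pi.sub_apply, mulVec_diagonal]
  simp [mulVec, dotProduct, hbal.sum_mul_eq hu i]

theorem kronecker_mulVec_apply [Fintype ν] [CommSemiring R] (L : Matrix ι ι R) (M : Matrix ν ν R)
    (v : ι × ν → R) (i : ι) (d : ν) :
    ((L ⊗ₖ M) *ᵥ v) (i, d) = ∑ e, M d e * (L *ᵥ fun j => v (j, e)) i := by
  simp only [mulVec, dotProduct, kroneckerMap_apply, Fintype.sum_prod_type, mul_sum]
  rw [sum_comm]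
  exact sum_congr rfl fun e _ => sum_congr rfl fun j _ => by ring

theorem one_kronecker_mulVec_apply [DecidableEq ι] [Fintype ν] [CommSemiring R] (A : Matrix ν ν R)
    (v : ι × ν → R) (i : ι) (d : ν) :
    (((1 : Matrix ι ι R) ⊗ₖ A) *ᵥ v) (i, d) = ∑ e, A d e * v (i, e) := by
  simp only [kronecker_mulVec_apply, one_mulVec]

theorem one_kronecker_mulVec_mem [DecidableEq ι] [Fintype ν] [CommSemiring R] {cl : ι → κ}
    (A : Matrix ν ν R) {v : ι × ν → R} (hv : v ∈ clusterSynchronized R ν cl) :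
    ((1 : Matrix ι ι R) ⊗ₖ A) *ᵥ v ∈ clusterSynchronized R ν cl := fun i j h d => by
  simp only [one_kronecker_mulVec_apply, hv i j h]

theorem IsInDegreeBalanced.weightedLaplacian_kronecker_mulVec_eq_zero [Fintype κ] [DecidableEq κ]
    [DecidableEq ι] [Fintype ν] [CommRing R] {a : ι → ι → R} {cl : ι → κ}
    (hbal : IsInDegreeBalanced a cl) (M : Matrix ν ν R) {v : ι × ν → R}
    (hv : v ∈ clusterSynchronized R ν cl) : (weightedLaplacian a ⊗ₖ M) *ᵥ v = 0 := by
  ext ⟨i, d⟩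
  rw [kronecker_mulVec_apply, Pi.zero_apply]
  refine sum_eq_zero fun e _ => ?_
  rw [hbal.weightedLaplacian_mulVec_eq_zero fun i j h => hv i j h e, Pi.zero_apply, mul_zero]

end Cluster

namespace Submodule

variable {E : Type*} [NormedAddCommGroup E] [NormedSpace ℝ E] (S : Submodule ℝ E)

def invtSubalgebra : Subalgebra ℝ (E →L[ℝ] E) where
  carrier := {g | ∀ v ∈ S, g v ∈ S}
  mul_mem' hg hh v hv := hg _ (hh v hv)
  add_mem' hg hh v hv := S.add_mem (hg v hv) (hh v hv)
  algebraMap_mem' c _ hv := S.smul_mem c hv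

theorem isClosed_invtSubalgebra (hS : IsClosed (S : Set E)) :
    IsClosed (S.invtSubalgebra : Set (E →L[ℝ] E)) := by
  have : (S.invtSubalgebra : Set (E →L[ℝ] E)) = ⋂ v ∈ S, (fun g : E →L[ℝ] E => g v) ⁻¹' S := by
    ext g; simp only [Set.mem_iInter, Set.mem_preimage, SetLike.mem_coe]; rfl
  rw [this]
  exact isClosed_biInter fun v _ => hS.preimage (continuous_eval_const v)

open NormedSpace in
theorem exp_apply_mem (hS : IsClosed (S : Set E)) {f : E →L[ℝ] E} (hf : ∀ v ∈ S, f v ∈ S)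
    {v : E} (hv : v ∈ S) : exp f v ∈ S := by
  have hexp : exp f ∈ S.invtSubalgebra := by
    rw [exp_eq_tsum ℝ]
    exact tsum_mem (S.isClosed_invtSubalgebra hS) fun n =>
      Subalgebra.smul_mem _ (Subalgebra.pow_mem _ (show f ∈ S.invtSubalgebra from hf) n) _
  exact hexp v hv

open NormedSpace in
theorem mem_of_hasDerivAt_of_mapsTo [CompleteSpace E] (hS : IsClosed (S : Set E))
    {f : E →L[ℝ] E} (hf : ∀ v ∈ S, f v ∈ S) {x : ℝ → E} (hx : ∀ t, HasDerivAt x (f (x t)) t)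
    {t₀ : ℝ} (h₀ : x t₀ ∈ S) (t : ℝ) : x t ∈ S := by
  set y : ℝ → E := fun t => exp ((t - t₀) • f) (x t₀)
  have hy : ∀ t, HasDerivAt y (f (y t)) t := fun t => by
    simpa [y] using ((hasDerivAt_exp_smul_const' f (t - t₀)).comp_sub_const t t₀).clm_apply
      (hasDerivAt_const t (x t₀))
  have hxy : x = y := ODE_solution_unique_univ (v := fun _ => f) (s := fun _ => Set.univ)
    (K := ‖f‖₊) (t₀ := t₀) (fun _ => f.lipschitz.lipschitzOnWith) (fun t => ⟨hx t, trivial⟩)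
    (fun t => ⟨hy t, trivial⟩) (by simp [y])
  rw [hxy]
  exact S.exp_apply_mem hS (fun v hv => S.smul_mem _ (hf v hv)) h₀

end Submodule

/-- Invariance of the cluster synchronization manifold (Theorem 3 setup): under the
in-degree balance condition, the manifold `M = {x : x_i = x_j whenever cl i = cl j}` is
invariant for `ẋ = (I ⊗ A)x - (L ⊗ BK)x`, where `L` is the graph Laplacian of the weights
`a`: any solution starting in `M` remains in `M` for all time. -/
theorem cluster_manifold_invariant {N p n m : ℕ}
    (a : Fin N → Fin N → ℝ) (cl : Fin N → Fin p)
    (A : Matrix (Fin n) (Fin n) ℝ) (B : Matrix (Fin n) (Fin m) ℝ)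
    (K : Matrix (Fin m) (Fin n) ℝ)
    (hbal : ∀ i : Fin N, ∀ ℓ : Fin p, cl i ≠ ℓ →
      ∑ j ∈ Finset.filter (fun j => cl j = ℓ) Finset.univ, a i j = 0)
    (L : Matrix (Fin N) (Fin N) ℝ)
    (hL : ∀ i j, L i j = (if i = j then ∑ k, a i k else 0) - a i j)
    (x : ℝ → (Fin N × Fin n → ℝ))
    (hx : ∀ t, HasDerivAt x
      ((((1 : Matrix (Fin N) (Fin N) ℝ) ⊗ₖ A) - L ⊗ₖ (B * K)) *ᵥ x t) t)
    (h0 : ∀ i j : Fin N, cl i = cl j → ∀ d, x 0 (i, d) = x 0 (j, d)) :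
    ∀ t : ℝ, ∀ i j : Fin N, cl i = cl j → ∀ d, x t (i, d) = x t (j, d) := by
  obtain rfl : L = weightedLaplacian a := by
    ext i j
    simp [hL, weightedLaplacian, diagonal_apply]
  set S := clusterSynchronized ℝ (Fin n) cl
  set F := (1 : Matrix (Fin N) (Fin N) ℝ) ⊗ₖ A - weightedLaplacian a ⊗ₖ (B * K)
  have hF : ∀ v ∈ S, F *ᵥ v ∈ S := fun v hv => by
    rw [sub_mulVec, IsInDegreeBalanced.weightedLaplacian_kronecker_mulVec_eq_zero hbal _ hv,
      sub_zero]
    exact one_kronecker_mulVec_mem A hv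
  exact fun t => S.mem_of_hasDerivAt_of_mapsTo S.closed_of_finiteDimensional
    (f := (mulVecLin F).toContinuousLinearMap) hF hx h0 t
end
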